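/- For all c ∈ ℝ, h > 0, ω ∈ ℝ and x ∈ ℝ, applying the BFD stencils to the complex exponential f(x) = e^{iωx} gives S⁻ₕf(x) = μ₁(ω) e^{iωx} and S⁺ₕf(x) = μ₂(ω) e^{iωx}, where μ₁(ω) = (8/(3h²))[−sin²(hω/4)(7−cos(hω/2)) − 4ic e^{ihω/4} sin⁵(hω/4)] and μ₂(ω) = (8/(3h²))[−sin²(hω/4)(7−cos(hω/2)) + 4ic e^{−ihω/4} sin⁵(hω/4)]. -/

import Mathlib

open Complex

/-- The BFD stencil `S⁻ₕ` (node `x_{j-1/4}`) applied to `f : ℝ → ℂ`. -/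
noncomputable def Sminus (c h : ℝ) (f : ℝ → ℂ) (x : ℝ) : ℂ :=
  (1/(3*(h:ℂ)^2)) *
    ((-f (x-h) + 16*f (x-h/2) - 30*f x + 16*f (x+h/2) - f (x+h)) +
      (c:ℂ) * (f (x-h) - 5*f (x-h/2) + 10*f x - 10*f (x+h/2) + 5*f (x+h)
        - f (x+3*h/2)))

/-- The BFD stencil `S⁺ₕ` (node `x_{j+1/4}`) applied to `f : ℝ → ℂ`. -/
noncomputable def Splus (c h : ℝ) (f : ℝ → ℂ) (x : ℝ) : ℂ :=
  (1/(3*(h:ℂ)^2)) *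
    ((-f (x-h) + 16*f (x-h/2) - 30*f x + 16*f (x+h/2) - f (x+h)) +
      (c:ℂ) * (-f (x-3*h/2) + 5*f (x-h) - 10*f (x-h/2) + 10*f x - 5*f (x+h/2)
        + f (x+h)))

/-- The symbol `μ₁(ω)`. -/
noncomputable def mu1 (c h ω : ℝ) : ℂ :=
  (8/(3*(h:ℂ)^2)) *
    (-(Real.sin (h*ω/4) : ℂ)^2 * (7 - (Real.cos (h*ω/2) : ℂ))
      - 4*I*(c:ℂ)*Complex.exp (I*(h*ω/4)) * (Real.sin (h*ω/4) : ℂ)^5)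

/-- The symbol `μ₂(ω)`. -/
noncomputable def mu2 (c h ω : ℝ) : ℂ :=
  (8/(3*(h:ℂ)^2)) *
    (-(Real.sin (h*ω/4) : ℂ)^2 * (7 - (Real.cos (h*ω/2) : ℂ))
      + 4*I*(c:ℂ)*Complex.exp (-I*(h*ω/4)) * (Real.sin (h*ω/4) : ℂ)^5)

/-! On `f(y) = e^{iωy}` a shift by `h/4` multiplies by `w = e^{ihω/4}`, so each stencil acts on `f`
as multiplication by a Laurent polynomial in `w`. Both Laurent polynomials are polynomials in
`D = w - w⁻¹ = 2i sin(hω/4)` apart from a factor `w^{±1}` on the upwind part: they equal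
`12D² - D⁴ ∓ c w^{±1} D⁵`, and so do `3h² μ₁` and `3h² μ₂` once `cos(hω/2) = 1 - 2 sin²(hω/4)`. -/

section LaurentSymbols

variable {K : Type*} [Field K]

def bfdSymbolMinus (c w : K) : K :=
  12 * (w - w⁻¹) ^ 2 - (w - w⁻¹) ^ 4 - c * w * (w - w⁻¹) ^ 5

def bfdSymbolPlus (c w : K) : K :=
  12 * (w - w⁻¹) ^ 2 - (w - w⁻¹) ^ 4 + c * w⁻¹ * (w - w⁻¹) ^ 5

theorem bfdSymbolMinus_eq_laurent (c : K) {w : K} (hw : w ≠ 0) :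
    bfdSymbolMinus c w
      = (-w ^ (-4 : ℤ) + 16 * w ^ (-2 : ℤ) - 30 + 16 * w ^ 2 - w ^ 4)
        + c * (w ^ (-4 : ℤ) - 5 * w ^ (-2 : ℤ) + 10 - 10 * w ^ 2 + 5 * w ^ 4 - w ^ 6) := by
  simp only [bfdSymbolMinus, zpow_neg, zpow_ofNat]
  field_simp
  ring

theorem bfdSymbolPlus_eq_laurent (c : K) {w : K} (hw : w ≠ 0) :
    bfdSymbolPlus c w
      = (-w ^ (-4 : ℤ) + 16 * w ^ (-2 : ℤ) - 30 + 16 * w ^ 2 - w ^ 4)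
        + c * (-w ^ (-6 : ℤ) + 5 * w ^ (-4 : ℤ) - 10 * w ^ (-2 : ℤ) + 10 - 5 * w ^ 2 + w ^ 4) := by
  simp only [bfdSymbolPlus, zpow_neg, zpow_ofNat]
  field_simp
  ring

end LaurentSymbols

theorem exp_I_mul_sub_inv (θ : ℂ) : exp (I * θ) - (exp (I * θ))⁻¹ = 2 * I * sin θ := by
  rw [← exp_neg, mul_comm I θ, ← neg_mul, exp_mul_I, exp_mul_I, cos_neg, sin_neg]
  ring

theorem exp_I_mul_eq_mul_zpow {ω : ℝ} (h x y : ℝ) (k : ℤ) (hy : y = x + k * (h / 4)) :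
    exp (I * ω * y) = exp (I * ω * x) * exp (I * (h * ω / 4)) ^ k := by
  rw [← exp_int_mul, ← exp_add, hy]
  congr 1
  push_cast
  ring

section Symbols

variable (c h ω : ℝ)

theorem Sminus_exp (x : ℝ) :
    Sminus c h (fun y : ℝ => exp (I * ω * y)) x
      = 1 / (3 * (h : ℂ) ^ 2) * bfdSymbolMinus (c : ℂ) (exp (I * (h * ω / 4)))
        * exp (I * ω * x) := by
  simp only [Sminus]
  rw [exp_I_mul_eq_mul_zpow h x (x - h) (-4) (by push_cast; ring),
    exp_I_mul_eq_mul_zpow h x (x - h / 2) (-2) (by push_cast; ring),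
    exp_I_mul_eq_mul_zpow h x (x + h / 2) 2 (by push_cast; ring),
    exp_I_mul_eq_mul_zpow h x (x + h) 4 (by push_cast; ring),
    exp_I_mul_eq_mul_zpow h x (x + 3 * h / 2) 6 (by push_cast; ring),
    bfdSymbolMinus_eq_laurent _ (exp_ne_zero _)]
  simp only [zpow_ofNat]
  ring

theorem Splus_exp (x : ℝ) :
    Splus c h (fun y : ℝ => exp (I * ω * y)) x
      = 1 / (3 * (h : ℂ) ^ 2) * bfdSymbolPlus (c : ℂ) (exp (I * (h * ω / 4)))
        * exp (I * ω * x) := by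
  simp only [Splus]
  rw [exp_I_mul_eq_mul_zpow h x (x - 3 * h / 2) (-6) (by push_cast; ring),
    exp_I_mul_eq_mul_zpow h x (x - h) (-4) (by push_cast; ring),
    exp_I_mul_eq_mul_zpow h x (x - h / 2) (-2) (by push_cast; ring),
    exp_I_mul_eq_mul_zpow h x (x + h / 2) 2 (by push_cast; ring),
    exp_I_mul_eq_mul_zpow h x (x + h) 4 (by push_cast; ring),
    bfdSymbolPlus_eq_laurent _ (exp_ne_zero _)]
  simp only [zpow_ofNat]
  ring

theorem ofReal_cos_half_eq (h ω : ℝ) :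
    (Real.cos (h * ω / 2) : ℂ) = 1 - 2 * sin (h * ω / 4) ^ 2 := by
  rw [← cos_two_mul_eq_one_sub]
  push_cast
  ring_nf

theorem I_pow_five : I ^ 5 = I := by rw [pow_succ, I_pow_four, one_mul]

theorem mu1_eq :
    mu1 c h ω = 1 / (3 * (h : ℂ) ^ 2) * bfdSymbolMinus (c : ℂ) (exp (I * (h * ω / 4))) := by
  rw [mu1, bfdSymbolMinus, exp_I_mul_sub_inv, ofReal_cos_half_eq]
  push_cast
  simp only [mul_pow, I_sq, I_pow_four, I_pow_five]
  ring

theorem mu2_eq :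
    mu2 c h ω = 1 / (3 * (h : ℂ) ^ 2) * bfdSymbolPlus (c : ℂ) (exp (I * (h * ω / 4))) := by
  rw [mu2, bfdSymbolPlus, exp_I_mul_sub_inv, ofReal_cos_half_eq, neg_mul I, exp_neg]
  push_cast
  simp only [mul_pow, I_sq, I_pow_four, I_pow_five]
  ring

end Symbols

theorem bfd_stencil_symbol_general (c h ω x : ℝ) :
    Sminus c h (fun y : ℝ => Complex.exp (I*ω*y)) x
      = mu1 c h ω * Complex.exp (I*ω*x) ∧
    Splus c h (fun y : ℝ => Complex.exp (I*ω*y)) x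
      = mu2 c h ω * Complex.exp (I*ω*x) :=
  ⟨by rw [Sminus_exp, mu1_eq], by rw [Splus_exp, mu2_eq]⟩

/-- Applying the BFD stencils to `f(x) = e^{iωx}` gives
`S⁻ₕ f(x) = μ₁(ω) e^{iωx}` and `S⁺ₕ f(x) = μ₂(ω) e^{iωx}`. -/
theorem bfd_stencil_symbol (c h ω x : ℝ) (hh : 0 < h) :
    Sminus c h (fun y : ℝ => Complex.exp (I*ω*y)) x
      = mu1 c h ω * Complex.exp (I*ω*x) ∧
    Splus c h (fun y : ℝ => Complex.exp (I*ω*y)) x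
      = mu2 c h ω * Complex.exp (I*ω*x) :=
  bfd_stencil_symbol_general c h ω x
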